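/- Write λ₊ = λ + ℓη, λ₋ = λ − ℓη, θ̄_a(z) = θ_a(z|τ/2), and let V(μ,z) be the 2×2 matrix with rows (θ̄₄(z+μ), θ̄₃(z+μ)) and (θ̄₄(z−μ), θ̄₃(z−μ)). Then for every function f : ℂ → ℂ, every j ∈ {1,2}, and every z with θ₁(2z|τ) ≠ 0: θ̄₄(z+λ₊)·(L₁ⱼ(λ)f)(z) + θ̄₃(z+λ₊)·(L₂ⱼ(λ)f)(z) = θ₁(2λ₊|τ)·V(λ₋,z)₁ⱼ·f(z+η) and θ̄₄(z−λ₊)·(L₁ⱼ(λ)f)(z) + θ̄₃(z−λ₊)·(L₂ⱼ(λ)f)(z) = θ₁(2λ₊|τ)·V(λ₋,z)₂ⱼ·f(z−η). (This is the factorized form L(λ) = θ₁(2λ₊)·:V⁻¹(λ₊,z)·diag(e^{η∂_z}, e^{−η∂_z})·V(λ₋,z):.) -/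

import Mathlib

/-- Jacobi theta function `θ_a(z|τ)` for `a = 1,2,3,4`. -/
noncomputable def jTheta (a : ℕ) (z τ : ℂ) : ℂ :=
  match a with
  | 1 => -∑' k : ℤ, Complex.exp ((Real.pi : ℂ) * Complex.I * τ * ((k : ℂ) + 1/2)^2
          + 2 * (Real.pi : ℂ) * Complex.I * (z + 1/2) * ((k : ℂ) + 1/2))
  | 2 => ∑' k : ℤ, Complex.exp ((Real.pi : ℂ) * Complex.I * τ * ((k : ℂ) + 1/2)^2
          + 2 * (Real.pi : ℂ) * Complex.I * z * ((k : ℂ) + 1/2))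
  | 3 => ∑' k : ℤ, Complex.exp ((Real.pi : ℂ) * Complex.I * τ * (k : ℂ)^2
          + 2 * (Real.pi : ℂ) * Complex.I * z * (k : ℂ))
  | 4 => ∑' k : ℤ, Complex.exp ((Real.pi : ℂ) * Complex.I * τ * (k : ℂ)^2
          + 2 * (Real.pi : ℂ) * Complex.I * (z + 1/2) * (k : ℂ))
  | _ => 0

/-- Sklyanin difference operator `s_a^{(ℓ)}` with parameters `τ, η` and spin `ℓ`. -/
noncomputable def sOp (τ η ℓ : ℂ) (a : ℕ) (f : ℂ → ℂ) (z : ℂ) : ℂ :=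
  (jTheta (a+1) (2*z - 2*ℓ*η) τ * f (z + η)
    - jTheta (a+1) (-(2*z) - 2*ℓ*η) τ * f (z - η)) / jTheta 1 (2*z) τ

/-- Entries of the elliptic quantum L-operator `L(λ)` (indices in `Fin 2`). -/
noncomputable def LOp (τ η ℓ lam : ℂ) (i j : Fin 2) (f : ℂ → ℂ) (z : ℂ) : ℂ :=
  if i = 0 then
    if j = 0 then
      (1/2) * (jTheta 1 (2*lam) τ * sOp τ η ℓ 0 f z + jTheta 4 (2*lam) τ * sOp τ η ℓ 3 f z)
    else
      (1/2) * (jTheta 2 (2*lam) τ * sOp τ η ℓ 1 f z + jTheta 3 (2*lam) τ * sOp τ η ℓ 2 f z)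
  else
    if j = 0 then
      (1/2) * (jTheta 2 (2*lam) τ * sOp τ η ℓ 1 f z - jTheta 3 (2*lam) τ * sOp τ η ℓ 2 f z)
    else
      (1/2) * (jTheta 1 (2*lam) τ * sOp τ η ℓ 0 f z - jTheta 4 (2*lam) τ * sOp τ η ℓ 3 f z)

/-- The matrix `V(μ,z)` with rows `(θ̄₄(z+μ), θ̄₃(z+μ))` and `(θ̄₄(z−μ), θ̄₃(z−μ))`,
where `θ̄_a(w) = θ_a(w|τ/2)`. -/
noncomputable def Vmat (τ μ z : ℂ) (i j : Fin 2) : ℂ :=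
  if i = 0 then (if j = 0 then jTheta 4 (z + μ) (τ/2) else jTheta 3 (z + μ) (τ/2))
  else (if j = 0 then jTheta 4 (z - μ) (τ/2) else jTheta 3 (z - μ) (τ/2))

/-!
Splitting the double series of θ₃(x|τ/2)·θ₃(y|τ/2) over ℤ² by the parity of m + n and substituting
(m, n) = (a + b, a − b) or (a + b + 1, a − b) gives
θ̄₃(x)θ̄₃(y) = θ₃(x+y)θ₃(x−y) + θ₂(x+y)θ₂(x−y); half-period shifts turn it into the analogous formulas
for θ̄₄(x)θ̄₃(y), θ̄₃(x)θ̄₄(y) and θ̄₄(x)θ̄₄(y). Together they say that the matrix of products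
θ_a(x−y)θ_a(x+y) through which the Sklyanin operators enter L(λ) has rank one: it is
(θ̄₃(y), −θ̄₄(y))ᵀ·(θ̄₄(x), θ̄₃(x)). With x − y = 2λ and x + y = ±2z − 2ℓη this gives
2θ₁(2z)·L(λ) = adj V(λ₊,z)·diag(f(z+η), f(z−η))·V(λ₋,z), and the same formulas give
det V(μ,z) = 2θ₁(2μ)θ₁(2z); multiplying by V(λ₊,z) yields the claim.
-/

open Complex Real Matrix

theorem jTheta_one_eq_neg_jTheta_two (z τ : ℂ) : jTheta 1 z τ = -jTheta 2 (z + 1/2) τ := rfl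

theorem jTheta_four_eq_jTheta_three (z τ : ℂ) : jTheta 4 z τ = jTheta 3 (z + 1/2) τ := rfl

noncomputable def thetaTerm (a τ w : ℂ) (k : ℤ) : ℂ :=
  Complex.exp ((Real.pi : ℂ) * Complex.I * τ * ((k : ℂ) + a)^2
    + 2 * (Real.pi : ℂ) * Complex.I * w * ((k : ℂ) + a))

theorem summable_thetaTerm {τ : ℂ} (hτ : 0 < τ.im) (a w : ℂ) : Summable (thetaTerm a τ w) := by
  refine (((summable_jacobiTheta₂_term_iff (w + a * τ) τ).mpr hτ).mul_left
    (cexp (π * I * τ * a ^ 2 + 2 * π * I * w * a))).congr fun k => ?_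
  rw [thetaTerm, jacobiTheta₂_term, ← Complex.exp_add]
  ring_nf

theorem hasSum_thetaTerm_mul_thetaTerm {τ : ℂ} (hτ : 0 < τ.im) (a b u v : ℂ) :
    HasSum (fun p : ℤ × ℤ => thetaTerm a τ u p.1 * thetaTerm b τ v p.2)
      ((∑' k, thetaTerm a τ u k) * ∑' k, thetaTerm b τ v k) :=
  (summable_thetaTerm hτ a u).hasSum.mul (summable_thetaTerm hτ b v).hasSum
    (summable_mul_of_summable_norm (summable_thetaTerm hτ a u).norm
      (summable_thetaTerm hτ b v).norm)

theorem jTheta_two_eq_tsum (z τ : ℂ) : jTheta 2 z τ = ∑' k, thetaTerm (1/2) τ z k := rfl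

theorem jTheta_three_eq_tsum (z τ : ℂ) : jTheta 3 z τ = ∑' k, thetaTerm 0 τ z k := by
  simp [jTheta, thetaTerm]

theorem jTheta_three_eq_jacobiTheta₂ (z τ : ℂ) : jTheta 3 z τ = jacobiTheta₂ z τ := by
  refine tsum_congr fun k => ?_
  rw [jacobiTheta₂_term]
  ring_nf

theorem jTheta_two_add_one (z τ : ℂ) : jTheta 2 (z + 1) τ = -jTheta 2 z τ := by
  rw [jTheta_two_eq_tsum, jTheta_two_eq_tsum, ← tsum_neg]
  refine tsum_congr fun k => ?_
  calc thetaTerm (1/2) τ (z + 1) k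
      = thetaTerm (1/2) τ z k * (cexp (k * (2 * π * I)) * cexp (π * I)) := by
        rw [thetaTerm, thetaTerm, ← Complex.exp_add, ← Complex.exp_add]
        ring_nf
    _ = -thetaTerm (1/2) τ z k := by
        rw [Complex.exp_int_mul_two_pi_mul_I, Complex.exp_pi_mul_I]
        ring

theorem jTheta_three_add_one (z τ : ℂ) : jTheta 3 (z + 1) τ = jTheta 3 z τ := by
  simp only [jTheta_three_eq_jacobiTheta₂, jacobiTheta₂_add_left]

theorem jTheta_three_neg (z τ : ℂ) : jTheta 3 (-z) τ = jTheta 3 z τ := by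
  simp only [jTheta_three_eq_jacobiTheta₂, jacobiTheta₂_neg_left]

theorem jTheta_four_neg (z τ : ℂ) : jTheta 4 (-z) τ = jTheta 4 z τ := by
  rw [jTheta_four_eq_jTheta_three, jTheta_four_eq_jTheta_three, show -z + 1/2 = -(z - 1/2) by ring,
    jTheta_three_neg, ← jTheta_three_add_one (z - 1/2)]
  ring_nf

theorem HasSum.add_of_int_prod_parity {M : Type*} [AddCommMonoid M] [TopologicalSpace M]
    [ContinuousAdd M] {F : ℤ × ℤ → M} {s t : M}
    (hs : HasSum (fun p : ℤ × ℤ => F (p.1 + p.2, p.1 - p.2)) s)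
    (ht : HasSum (fun p : ℤ × ℤ => F (p.1 + p.2 + 1, p.1 - p.2)) t) :
    HasSum F (s + t) := by
  set e : ℤ × ℤ → ℤ × ℤ := fun p => (p.1 + p.2, p.1 - p.2)
  set o : ℤ × ℤ → ℤ × ℤ := fun p => (p.1 + p.2 + 1, p.1 - p.2)
  have he : e.Injective := fun p q h => by
    simp only [e, Prod.mk.injEq] at h
    ext <;> omega
  have ho : o.Injective := fun p q h => by
    simp only [o, Prod.mk.injEq] at h
    ext <;> omega
  have hcompl : IsCompl (Set.range e) (Set.range o) := by
    rw [← compl_eq_iff_isCompl]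
    ext ⟨m, n⟩
    simp only [Set.mem_range, Set.mem_compl_iff, not_exists, e, o, Prod.mk.injEq]
    constructor
    · intro h
      have := h ((m + n) / 2, (m - n) / 2)
      exact ⟨((m + n - 1) / 2, (m - n - 1) / 2), by omega⟩
    · rintro ⟨p, hm, hn⟩ q ⟨hm', hn'⟩
      omega
  exact (he.hasSum_range_iff.2 hs).add_isCompl hcompl (ho.hasSum_range_iff.2 ht)

theorem jTheta_three_mul_jTheta_three_half {τ : ℂ} (hτ : 0 < τ.im) (x y : ℂ) :
    jTheta 3 x (τ/2) * jTheta 3 y (τ/2)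
      = jTheta 3 (x + y) τ * jTheta 3 (x - y) τ + jTheta 2 (x + y) τ * jTheta 2 (x - y) τ := by
  have hτ2 : 0 < (τ/2).im := by simpa using half_pos hτ
  simp only [jTheta_three_eq_tsum, jTheta_two_eq_tsum]
  refine (hasSum_thetaTerm_mul_thetaTerm hτ2 0 0 x y).unique (HasSum.add_of_int_prod_parity ?_ ?_)
  · convert hasSum_thetaTerm_mul_thetaTerm hτ 0 0 (x + y) (x - y) using 2 with p
    simp only [thetaTerm, ← Complex.exp_add]
    push_cast
    ring_nf
  · convert hasSum_thetaTerm_mul_thetaTerm hτ (1/2) (1/2) (x + y) (x - y) using 2 with p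
    simp only [thetaTerm, ← Complex.exp_add]
    push_cast
    ring_nf

theorem jTheta_four_mul_jTheta_three_half {τ : ℂ} (hτ : 0 < τ.im) (x y : ℂ) :
    jTheta 4 x (τ/2) * jTheta 3 y (τ/2)
      = jTheta 1 (x + y) τ * jTheta 1 (x - y) τ + jTheta 4 (x + y) τ * jTheta 4 (x - y) τ := by
  simp only [jTheta_four_eq_jTheta_three, jTheta_one_eq_neg_jTheta_two]
  linear_combination (norm := ring_nf) jTheta_three_mul_jTheta_three_half hτ (x + 1/2) y

theorem jTheta_three_mul_jTheta_four_half {τ : ℂ} (hτ : 0 < τ.im) (x y : ℂ) :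
    jTheta 3 x (τ/2) * jTheta 4 y (τ/2)
      = jTheta 4 (x + y) τ * jTheta 4 (x - y) τ - jTheta 1 (x + y) τ * jTheta 1 (x - y) τ := by
  simp only [jTheta_four_eq_jTheta_three, jTheta_one_eq_neg_jTheta_two]
  linear_combination (norm := ring_nf) jTheta_three_mul_jTheta_three_half hτ x (y + 1/2)
    - jTheta 3 (x + y + 1/2) τ * jTheta_three_add_one (x - y - 1/2) τ
    + jTheta 2 (x + y + 1/2) τ * jTheta_two_add_one (x - y - 1/2) τ

theorem jTheta_four_mul_jTheta_four_half {τ : ℂ} (hτ : 0 < τ.im) (x y : ℂ) :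
    jTheta 4 x (τ/2) * jTheta 4 y (τ/2)
      = jTheta 3 (x + y) τ * jTheta 3 (x - y) τ - jTheta 2 (x + y) τ * jTheta 2 (x - y) τ := by
  simp only [jTheta_four_eq_jTheta_three]
  linear_combination (norm := ring_nf) jTheta_three_mul_jTheta_three_half hτ (x + 1/2) (y + 1/2)
    + jTheta 3 (x - y) τ * jTheta_three_add_one (x + y) τ
    + jTheta 2 (x - y) τ * jTheta_two_add_one (x + y) τ

noncomputable def sklyaninCoeff (τ u w : ℂ) : Matrix (Fin 2) (Fin 2) ℂ :=
  !![jTheta 1 u τ * jTheta 1 w τ + jTheta 4 u τ * jTheta 4 w τ,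
      jTheta 2 u τ * jTheta 2 w τ + jTheta 3 u τ * jTheta 3 w τ;
    jTheta 2 u τ * jTheta 2 w τ - jTheta 3 u τ * jTheta 3 w τ,
      jTheta 1 u τ * jTheta 1 w τ - jTheta 4 u τ * jTheta 4 w τ]

/-- `thetaRow τ (z ± μ)` are the rows of `V(μ,z)`; `thetaCol τ (z ∓ μ)` are, up to sign, the columns
of its adjugate. -/
noncomputable def thetaRow (τ x : ℂ) : Fin 2 → ℂ := ![jTheta 4 x (τ/2), jTheta 3 x (τ/2)]

noncomputable def thetaCol (τ y : ℂ) : Fin 2 → ℂ := ![jTheta 3 y (τ/2), -jTheta 4 y (τ/2)]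

theorem thetaRow_neg (τ x : ℂ) : thetaRow τ (-x) = thetaRow τ x := by
  simp only [thetaRow, jTheta_three_neg, jTheta_four_neg]

theorem thetaCol_neg (τ y : ℂ) : thetaCol τ (-y) = thetaCol τ y := by
  simp only [thetaCol, jTheta_three_neg, jTheta_four_neg]

theorem sklyaninCoeff_sub_add {τ : ℂ} (hτ : 0 < τ.im) (x y : ℂ) :
    sklyaninCoeff τ (x - y) (x + y) = vecMulVec (thetaCol τ y) (thetaRow τ x) := by
  ext i j
  fin_cases i <;> fin_cases j <;> simp only [sklyaninCoeff, thetaCol, thetaRow,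
    vecMulVec_apply, of_apply, cons_val', cons_val_zero, cons_val_one, cons_val_fin_one, Fin.zero_eta,
    Fin.mk_one, Fin.isValue, neg_mul]
  · linear_combination -jTheta_four_mul_jTheta_three_half hτ x y
  · linear_combination -jTheta_three_mul_jTheta_three_half hτ x y
  · linear_combination jTheta_four_mul_jTheta_four_half hτ x y
  · linear_combination jTheta_three_mul_jTheta_four_half hτ x y

noncomputable def LOpMatrix (τ η ℓ lam : ℂ) (f : ℂ → ℂ) (z : ℂ) : Matrix (Fin 2) (Fin 2) ℂ :=
  of fun i j => LOp τ η ℓ lam i j f z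

theorem smul_LOpMatrix {τ z : ℂ} (hz : jTheta 1 (2*z) τ ≠ 0) (η ℓ lam : ℂ) (f : ℂ → ℂ) :
    (2 * jTheta 1 (2*z) τ) • LOpMatrix τ η ℓ lam f z
      = f (z + η) • sklyaninCoeff τ (2*lam) (2*z - 2*ℓ*η)
        - f (z - η) • sklyaninCoeff τ (2*lam) (-(2*z) - 2*ℓ*η) := by
  ext i j
  fin_cases i <;> fin_cases j <;>
    simp only [LOpMatrix, LOp, sOp, sklyaninCoeff, Matrix.smul_apply, Matrix.sub_apply, of_apply, smul_of,
      smul_cons, smul_empty, smul_eq_mul, cons_val', cons_val_zero, cons_val_one, cons_val_fin_one,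
      Fin.zero_eta, Fin.mk_one, Fin.isValue, ↓reduceIte, one_ne_zero, zero_add, Nat.reduceAdd] <;>
    field_simp <;> ring

theorem adjugate_Vmat_mul_diagonal_mul (τ μ ν z a b : ℂ) :
    adjugate (of (Vmat τ μ z)) * diagonal ![a, b] * of (Vmat τ ν z)
      = a • vecMulVec (thetaCol τ (z - μ)) (thetaRow τ (z + ν))
        - b • vecMulVec (thetaCol τ (z + μ)) (thetaRow τ (z - ν)) := by
  ext i j
  fin_cases i <;> fin_cases j <;>
    simp only [adjugate_fin_two, Vmat, thetaRow, thetaCol, vecMulVec_cons, vecMul_diagonal, cons_mul,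
      empty_mul, mul_apply, Fin.sum_univ_two, Matrix.sub_apply, Pi.smul_apply, of_apply, smul_of, smul_cons,
      smul_empty, smul_eq_mul, cons_val', cons_val_zero, cons_val_one, cons_val_fin_one, Fin.zero_eta,
      Fin.mk_one, Fin.isValue, ↓reduceIte, one_ne_zero, Equiv.symm_apply_apply, Nat.succ_eq_add_one,
      Nat.reduceAdd] <;>
    ring

theorem smul_LOpMatrix_eq_adjugate_mul {τ z : ℂ} (hτ : 0 < τ.im) (hz : jTheta 1 (2*z) τ ≠ 0)
    (η ℓ lam : ℂ) (f : ℂ → ℂ) :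
    (2 * jTheta 1 (2*z) τ) • LOpMatrix τ η ℓ lam f z
      = adjugate (of (Vmat τ (lam + ℓ*η) z)) * diagonal ![f (z + η), f (z - η)]
        * of (Vmat τ (lam - ℓ*η) z) := by
  have hfwd : sklyaninCoeff τ (2*lam) (2*z - 2*ℓ*η)
      = vecMulVec (thetaCol τ (z - (lam + ℓ*η))) (thetaRow τ (z + (lam - ℓ*η))) := by
    rw [← sklyaninCoeff_sub_add hτ]
    congr 1 <;> ring
  have hbwd : sklyaninCoeff τ (2*lam) (-(2*z) - 2*ℓ*η)
      = vecMulVec (thetaCol τ (z + (lam + ℓ*η))) (thetaRow τ (z - (lam - ℓ*η))) := by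
    rw [← thetaCol_neg, ← thetaRow_neg, ← sklyaninCoeff_sub_add hτ]
    congr 1 <;> ring
  rw [smul_LOpMatrix hz, hfwd, hbwd, adjugate_Vmat_mul_diagonal_mul]

theorem det_Vmat {τ : ℂ} (hτ : 0 < τ.im) (μ z : ℂ) :
    (of (Vmat τ μ z)).det = 2 * jTheta 1 (2*μ) τ * jTheta 1 (2*z) τ := by
  rw [det_fin_two]
  simp only [of_apply, Vmat, Fin.isValue, ↓reduceIte, one_ne_zero]
  linear_combination (norm := ring_nf) jTheta_four_mul_jTheta_three_half hτ (z + μ) (z - μ)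
    - jTheta_three_mul_jTheta_four_half hτ (z + μ) (z - μ)

theorem Vmat_mul_LOpMatrix {τ z : ℂ} (hτ : 0 < τ.im) (hz : jTheta 1 (2*z) τ ≠ 0)
    (η ℓ lam : ℂ) (f : ℂ → ℂ) :
    of (Vmat τ (lam + ℓ*η) z) * LOpMatrix τ η ℓ lam f z
      = jTheta 1 (2*(lam + ℓ*η)) τ
        • (diagonal ![f (z + η), f (z - η)] * of (Vmat τ (lam - ℓ*η) z)) := by
  refine smul_right_injective _ (mul_ne_zero two_ne_zero hz) ?_
  dsimp only
  rw [← Matrix.mul_smul, smul_LOpMatrix_eq_adjugate_mul hτ hz, ← Matrix.mul_assoc,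
    ← Matrix.mul_assoc, mul_adjugate, det_Vmat hτ, smul_mul, smul_mul, Matrix.one_mul, smul_smul]
  congr 1
  ring

/-- Factorized form of the L-operator:
`L(λ) = θ₁(2λ₊)·:V⁻¹(λ₊,z)·diag(e^{η∂_z}, e^{−η∂_z})·V(λ₋,z):`, stated as the pair of
linear relations obtained by multiplying by `V(λ₊,z)` from the left. -/
theorem LOp_factorized (τ η ℓ lam : ℂ) (hτ : 0 < τ.im) (f : ℂ → ℂ) (j : Fin 2) (z : ℂ)
    (hz : jTheta 1 (2*z) τ ≠ 0) :
    (jTheta 4 (z + (lam + ℓ*η)) (τ/2) * LOp τ η ℓ lam 0 j f z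
        + jTheta 3 (z + (lam + ℓ*η)) (τ/2) * LOp τ η ℓ lam 1 j f z
      = jTheta 1 (2*(lam + ℓ*η)) τ * Vmat τ (lam - ℓ*η) z 0 j * f (z + η))
    ∧ (jTheta 4 (z - (lam + ℓ*η)) (τ/2) * LOp τ η ℓ lam 0 j f z
        + jTheta 3 (z - (lam + ℓ*η)) (τ/2) * LOp τ η ℓ lam 1 j f z
      = jTheta 1 (2*(lam + ℓ*η)) τ * Vmat τ (lam - ℓ*η) z 1 j * f (z - η)) := by
  have h0 := congrFun₂ (Vmat_mul_LOpMatrix hτ hz η ℓ lam f) 0 j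
  have h1 := congrFun₂ (Vmat_mul_LOpMatrix hτ hz η ℓ lam f) 1 j
  simp only [mul_apply, Fin.sum_univ_two, of_apply, LOpMatrix, Matrix.smul_apply, diagonal_apply,
    smul_eq_mul] at h0 h1
  fin_cases j <;>
    simp only [Vmat, Fin.isValue, Fin.zero_eta, Fin.mk_one, ↓reduceIte, one_ne_zero, zero_ne_one,
      cons_val_zero, cons_val_one, cons_val_fin_one, zero_mul, add_zero, zero_add] at h0 h1 ⊢ <;>
    exact ⟨by linear_combination h0, by linear_combination h1⟩
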